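/- arXiv:1306.4519 — 2 statements merged into one kernel-verified Lean document; each statement's English description precedes it below -/
import Mathlib

section
/- Let n ≥ 3 and let x ∈ Ind_n. Then the following are equivalent: (a) for every p ∈ Ind_n and every t ∈ [0,1], the point t·p + (1−t)·x lies in Ind_n (i.e. the line segment from p to x lies in Ind_n for every p ∈ Ind_n); (b) there exists c ∈ [0,1] such that x = c·𝟙, where 𝟙 = (1,…,1). -/
noncomputable def coord (n : ℕ) (p : Fin n → ℝ) (k : ℕ) : ℝ :=
  if h : 1 ≤ k ∧ k ≤ n then p ⟨k - 1, by omega⟩ else 0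

noncomputable def psi (n : ℕ) (p : Fin n → ℝ) : ℝ :=
  (((2:ℝ)^(n-1))⁻¹ * ∑ k ∈ Finset.range n, ((n-1).choose k : ℝ) * coord n p (k+1))^2
  - ((2:ℝ)^(n-1))⁻¹ * ∑ k ∈ Finset.range (n-1),
      ((n-2).choose k : ℝ) * ((coord n p (k+2))^2 + coord n p (k+1) * coord n p (n-k-1))

def Ind (n : ℕ) : Set (Fin n → ℝ) :=
  {p | (∀ i, p i ∈ Set.Icc (0:ℝ) 1) ∧ psi n p = 0}

def Infl (n : ℕ) : Set (Fin n → ℝ) :=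
  {p | (∀ i, p i ∈ Set.Icc (0:ℝ) 1) ∧ ∃ s, 1 ≤ s ∧ s ≤ n ∧ coord n p s ≠ coord n p (n - s + 1)}

def GST (n : ℕ) : Set (Fin n → ℝ) := Ind n ∩ Infl n

noncomputable def Af (n : ℕ) (p : Fin n → ℝ) : ℝ :=
  ((2:ℝ)^(n-1))⁻¹ * ∑ k ∈ Finset.range n, ((n-1).choose k : ℝ) * coord n p (k+1)

noncomputable def Bil (n : ℕ) (p q : Fin n → ℝ) : ℝ :=
  ((2:ℝ)^(n-1))⁻¹ * ∑ k ∈ Finset.range (n-1),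
      ((n-2).choose k : ℝ) * (coord n p (k+2) * coord n q (k+2)
        + (coord n p (k+1) * coord n q (n-k-1) + coord n q (k+1) * coord n p (n-k-1))/2)

lemma psi_eq (n : ℕ) (p : Fin n → ℝ) : psi n p = (Af n p)^2 - Bil n p p := by
  unfold psi Af Bil
  have h : ∀ k ∈ Finset.range (n-1),
      ((n-2).choose k : ℝ) * ((coord n p (k+2))^2 + coord n p (k+1) * coord n p (n-k-1))
      = ((n-2).choose k : ℝ) * (coord n p (k+2) * coord n p (k+2)
        + (coord n p (k+1) * coord n p (n-k-1) + coord n p (k+1) * coord n p (n-k-1))/2) := by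
    intro k _; ring
  rw [Finset.sum_congr rfl h]

lemma coord_one (n m : ℕ) (h1 : 1 ≤ m) (h2 : m ≤ n) : coord n (1 : Fin n → ℝ) m = 1 := by
  unfold coord; rw [dif_pos ⟨h1, h2⟩]; rfl

lemma coord_comb (n : ℕ) (s t : ℝ) (p q : Fin n → ℝ) (m : ℕ) :
    coord n (s • p + t • q) m = s * coord n p m + t * coord n q m := by
  unfold coord
  split
  · simp [Pi.add_apply]
  · ring

lemma Af_comb (n : ℕ) (s t : ℝ) (p q : Fin n → ℝ) :
    Af n (s • p + t • q) = s * Af n p + t * Af n q := by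
  unfold Af
  have h : ∀ k ∈ Finset.range n, ((n-1).choose k : ℝ) * coord n (s • p + t • q) (k+1)
      = s * (((n-1).choose k : ℝ) * coord n p (k+1))
        + t * (((n-1).choose k : ℝ) * coord n q (k+1)) := by
    intro k _; rw [coord_comb]; ring
  rw [Finset.sum_congr rfl h, Finset.sum_add_distrib, ← Finset.mul_sum, ← Finset.mul_sum]
  ring

lemma Bil_symm (n : ℕ) (p q : Fin n → ℝ) : Bil n p q = Bil n q p := by
  unfold Bil
  congr 1
  exact Finset.sum_congr rfl (fun k _ => by ring)

lemma Bil_comb_right (n : ℕ) (s t : ℝ) (r p q : Fin n → ℝ) :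
    Bil n r (s • p + t • q) = s * Bil n r p + t * Bil n r q := by
  unfold Bil
  have h : ∀ k ∈ Finset.range (n-1),
      ((n-2).choose k : ℝ) * (coord n r (k+2) * coord n (s • p + t • q) (k+2)
        + (coord n r (k+1) * coord n (s • p + t • q) (n-k-1)
          + coord n (s • p + t • q) (k+1) * coord n r (n-k-1))/2)
      = s * (((n-2).choose k : ℝ) * (coord n r (k+2) * coord n p (k+2)
        + (coord n r (k+1) * coord n p (n-k-1) + coord n p (k+1) * coord n r (n-k-1))/2))
        + t * (((n-2).choose k : ℝ) * (coord n r (k+2) * coord n q (k+2)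
        + (coord n r (k+1) * coord n q (n-k-1) + coord n q (k+1) * coord n r (n-k-1))/2)) := by
    intro k _; rw [coord_comb, coord_comb, coord_comb]; ring
  rw [Finset.sum_congr rfl h, Finset.sum_add_distrib, ← Finset.mul_sum, ← Finset.mul_sum]
  ring

lemma psi_comb (n : ℕ) (s t : ℝ) (p q : Fin n → ℝ) :
    psi n (s • p + t • q) = s^2 * psi n p + t^2 * psi n q
      + 2*s*t*(Af n p * Af n q - Bil n p q) := by
  rw [psi_eq, psi_eq, psi_eq, Af_comb]
  have h1 : Bil n (s • p + t • q) (s • p + t • q)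
      = s * Bil n p (s • p + t • q) + t * Bil n q (s • p + t • q) := by
    rw [Bil_symm, Bil_comb_right]
    rw [Bil_symm n p, Bil_symm n q]
  rw [h1, Bil_comb_right, Bil_comb_right, Bil_symm n q p]
  ring
lemma Bil_one (n : ℕ) (hn : 2 ≤ n) (p : Fin n → ℝ) : Bil n p 1 = Af n p := by
  obtain ⟨m, rfl⟩ : ∃ m, n = m + 2 := ⟨n - 2, by omega⟩
  unfold Bil Af
  congr 1
  show ∑ k ∈ Finset.range (m+1), _ = ∑ k ∈ Finset.range (m+2), _
  set c : ℕ → ℝ := fun j => coord (m+2) p j with hc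
  have e1 : ∀ k ∈ Finset.range (m+1),
      ((m+2-2).choose k : ℝ) * (coord (m+2) p (k+2) * coord (m+2) 1 (k+2)
        + (coord (m+2) p (k+1) * coord (m+2) 1 (m+2-k-1)
          + coord (m+2) 1 (k+1) * coord (m+2) p (m+2-k-1))/2)
      = (m.choose k : ℝ) * c (k+2) + ((m.choose k : ℝ) * c (k+1))/2
        + ((m.choose k : ℝ) * c (m+1-k))/2 := by
    intro k hk
    simp only [Finset.mem_range] at hk
    rw [coord_one _ _ (by omega) (by omega), coord_one _ _ (by omega) (by omega),
        coord_one _ _ (by omega) (by omega), show m+2-k-1 = m+1-k by omega]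
    show (m.choose k : ℝ) * _ = _
    ring
  rw [Finset.sum_congr rfl e1, Finset.sum_add_distrib, Finset.sum_add_distrib]
  have e2 : ∑ k ∈ Finset.range (m+1), ((m.choose k : ℝ) * c (m+1-k))/2
      = ∑ k ∈ Finset.range (m+1), ((m.choose k : ℝ) * c (k+1))/2 := by
    rw [← Finset.sum_range_reflect (fun j => ((m.choose j : ℝ) * c (j+1))/2) (m+1)]
    refine Finset.sum_congr rfl (fun k hk => ?_)
    simp only [Finset.mem_range] at hk
    have h1 : m + 1 - 1 - k = m - k := by omega
    rw [h1, Nat.choose_symm (by omega : k ≤ m), show (m-k)+1 = m+1-k by omega]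
  rw [e2]
  set g : ℕ → ℝ := fun k => (if k = 0 then 0 else ((m.choose (k-1) : ℝ))) * c (k+1) with hg
  have e3 : ∑ k ∈ Finset.range (m+2), g k
      = ∑ k ∈ Finset.range (m+1), (m.choose k : ℝ) * c (k+2) := by
    rw [Finset.sum_range_succ' g (m+1)]
    simp [hg]
  have e4 : ∑ k ∈ Finset.range (m+2), (m.choose k : ℝ) * c (k+1)
      = ∑ k ∈ Finset.range (m+1), (m.choose k : ℝ) * c (k+1) := by
    rw [Finset.sum_range_succ]
    simp [Nat.choose_eq_zero_of_lt (by omega : m < m+1)]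
  have e5 : ∑ k ∈ Finset.range (m+2), ((m+2-1).choose k : ℝ) * c (k+1)
      = ∑ k ∈ Finset.range (m+2), (g k + (m.choose k : ℝ) * c (k+1)) := by
    refine Finset.sum_congr rfl (fun k _ => ?_)
    match k with
    | 0 => simp [hg]
    | (j+1) =>
      simp only [hg, if_neg (Nat.succ_ne_zero j), Nat.add_sub_cancel]
      show (((m+1).choose (j+1) : ℝ)) * c (j+2) = _
      rw [Nat.choose_succ_succ]
      push_cast
      ring
  have e6 : ∑ k ∈ Finset.range (m+2), ((m+2-1).choose k : ℝ) * coord (m+2) p (k+1)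
      = ∑ k ∈ Finset.range (m+2), ((m+2-1).choose k : ℝ) * c (k+1) := rfl
  rw [e6, e5, Finset.sum_add_distrib, e3, e4]
  rw [← Finset.sum_div]; ring

lemma Af_one (n : ℕ) (hn : 1 ≤ n) : Af n (1 : Fin n → ℝ) = 1 := by
  obtain ⟨m, rfl⟩ : ∃ m, n = m + 1 := ⟨n - 1, by omega⟩
  unfold Af
  have h : ∀ k ∈ Finset.range (m+1), ((m+1-1).choose k : ℝ) * coord (m+1) 1 (k+1)
      = ((m.choose k : ℕ) : ℝ) := by
    intro k hk
    simp only [Finset.mem_range] at hk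
    rw [coord_one _ _ (by omega) (by omega)]
    show (m.choose k : ℝ) * 1 = _
    ring
  rw [Finset.sum_congr rfl h, ← Nat.cast_sum, Nat.sum_range_choose]
  push_cast
  rw [inv_mul_cancel₀ (by positivity)]
noncomputable def Ev (n : ℕ) (j : Fin n) : Fin n → ℝ := fun i => if i = j then 1 else 0

lemma coord_Ev (n : ℕ) (j : Fin n) (k : ℕ) (h1 : 1 ≤ k) (h2 : k ≤ n) :
    coord n (Ev n j) k = if k = (j:ℕ)+1 then 1 else 0 := by
  unfold coord Ev
  rw [dif_pos ⟨h1, h2⟩]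
  by_cases h : k = (j:ℕ)+1
  · rw [if_pos h, if_pos (Fin.ext (show k - 1 = (j:ℕ) by omega))]
  · rw [if_neg h, if_neg (fun he => h (by
      have hv : k - 1 = (j:ℕ) := congrArg Fin.val he
      omega))]

lemma Af_Ev (n : ℕ) (j : Fin n) :
    Af n (Ev n j) = ((2:ℝ)^(n-1))⁻¹ * ((n-1).choose (j:ℕ) : ℝ) := by
  unfold Af
  congr 1
  have h : ∀ k ∈ Finset.range n, ((n-1).choose k : ℝ) * coord n (Ev n j) (k+1)
      = ((n-1).choose k : ℝ) * (if k = (j:ℕ) then 1 else 0) := by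
    intro k hk
    simp only [Finset.mem_range] at hk
    rw [coord_Ev n j (k+1) (by omega) (by omega)]
    congr 1
    by_cases h : k = (j:ℕ)
    · rw [if_pos (by omega), if_pos h]
    · rw [if_neg (by omega), if_neg h]
  rw [Finset.sum_congr rfl h]
  rw [Finset.sum_eq_single (j:ℕ)]
  · simp
  · intro b _ hb; rw [if_neg hb]; ring
  · intro h; exact absurd (Finset.mem_range.mpr j.isLt) h

lemma Bil_Ev (n : ℕ) (hn : 3 ≤ n) (p : Fin n → ℝ) (j : Fin n) :
    Bil n p (Ev n j) = ((2:ℝ)^(n-1))⁻¹ *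
      ((if 1 ≤ (j:ℕ) then ((n-2).choose ((j:ℕ)-1) : ℝ) else 0) * coord n p ((j:ℕ)+1)
       + (if (j:ℕ) ≤ n-2 then ((n-2).choose (j:ℕ) : ℝ) else 0) * coord n p (n-(j:ℕ)-1)) := by
  set J := (j:ℕ) with hJ
  have hJn : J < n := j.isLt
  unfold Bil
  congr 1
  have h : ∀ k ∈ Finset.range (n-1),
      ((n-2).choose k : ℝ) * (coord n p (k+2) * coord n (Ev n j) (k+2)
        + (coord n p (k+1) * coord n (Ev n j) (n-k-1)
          + coord n (Ev n j) (k+1) * coord n p (n-k-1))/2)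
      = ((n-2).choose k : ℝ) * coord n p (k+2) * (if k+2 = J+1 then 1 else 0)
        + ((n-2).choose k : ℝ) * coord n p (k+1) * (if n-k-1 = J+1 then 1 else 0) / 2
        + ((n-2).choose k : ℝ) * coord n p (n-k-1) * (if k+1 = J+1 then 1 else 0) / 2 := by
    intro k hk
    simp only [Finset.mem_range] at hk
    rw [coord_Ev n j (k+2) (by omega) (by omega), coord_Ev n j (n-k-1) (by omega) (by omega),
        coord_Ev n j (k+1) (by omega) (by omega)]
    ring
  rw [Finset.sum_congr rfl h, Finset.sum_add_distrib, Finset.sum_add_distrib]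
  have T1 : ∑ k ∈ Finset.range (n-1),
      ((n-2).choose k : ℝ) * coord n p (k+2) * (if k+2 = J+1 then 1 else 0)
      = (if 1 ≤ J then ((n-2).choose (J-1) : ℝ) else 0) * coord n p (J+1) := by
    by_cases hJ1 : 1 ≤ J
    · rw [if_pos hJ1]
      rw [Finset.sum_eq_single_of_mem (J-1) (Finset.mem_range.mpr (by omega))]
      · rw [if_pos (by omega), show J-1+2 = J+1 by omega]; ring
      · intro b _ hb; rw [if_neg (by omega), mul_zero]
    · rw [if_neg hJ1]
      rw [Finset.sum_eq_zero (fun b hb => by rw [if_neg (by omega), mul_zero])]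
      ring
  have T2 : ∑ k ∈ Finset.range (n-1),
      ((n-2).choose k : ℝ) * coord n p (k+1) * (if n-k-1 = J+1 then 1 else 0) / 2
      = (if J ≤ n-2 then ((n-2).choose J : ℝ) else 0) * coord n p (n-J-1) / 2 := by
    by_cases hJ2 : J ≤ n-2
    · rw [if_pos hJ2]
      rw [Finset.sum_eq_single_of_mem (n-2-J) (Finset.mem_range.mpr (by omega))]
      · rw [if_pos (by omega), Nat.choose_symm (by omega : J ≤ n-2),
            show n-2-J+1 = n-J-1 by omega]
        ring
      · intro b hb hbne
        simp only [Finset.mem_range] at hb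
        rw [if_neg (by omega), mul_zero, zero_div]
    · rw [if_neg hJ2]
      rw [Finset.sum_eq_zero (fun b hb => by
        simp only [Finset.mem_range] at hb
        rw [if_neg (by omega), mul_zero, zero_div])]
      ring
  have T3 : ∑ k ∈ Finset.range (n-1),
      ((n-2).choose k : ℝ) * coord n p (n-k-1) * (if k+1 = J+1 then 1 else 0) / 2
      = (if J ≤ n-2 then ((n-2).choose J : ℝ) else 0) * coord n p (n-J-1) / 2 := by
    by_cases hJ2 : J ≤ n-2
    · rw [if_pos hJ2]
      rw [Finset.sum_eq_single_of_mem J (Finset.mem_range.mpr (by omega))]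
      · rw [if_pos rfl]; ring
      · intro b _ hbne; rw [if_neg (by omega), mul_zero, zero_div]
    · rw [if_neg hJ2]
      rw [Finset.sum_eq_zero (fun b hb => by
        simp only [Finset.mem_range] at hb
        rw [if_neg (by omega), mul_zero, zero_div])]
      ring
  rw [T1, T2, T3]
  ring

lemma psi_one (n : ℕ) (hn : 2 ≤ n) : psi n (1 : Fin n → ℝ) = 0 := by
  rw [psi_eq, Bil_one n hn, Af_one n (by omega)]
  norm_num

lemma psi_Ev_first (n : ℕ) (hn : 3 ≤ n) : 0 < psi n (Ev n ⟨0, by omega⟩) := by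
  have hv : ((⟨0, by omega⟩ : Fin n) : ℕ) = 0 := rfl
  rw [psi_eq, Af_Ev, Bil_Ev n hn _ ⟨0, by omega⟩, hv]
  rw [coord_Ev n _ (n-0-1) (by omega) (by omega), hv]
  rw [if_neg (by omega : ¬ (1:ℕ) ≤ 0), if_pos (by omega : (0:ℕ) ≤ n-2),
      if_neg (by omega : ¬ n-0-1 = 0+1)]
  simp only [Nat.choose_zero_right]
  have h2 : (0:ℝ) < ((2:ℝ)^(n-1))⁻¹ := by positivity
  nlinarith

lemma psi_Ev_last (n : ℕ) (hn : 3 ≤ n) : psi n (Ev n ⟨n-1, by omega⟩) < 0 := by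
  have hv : ((⟨n-1, by omega⟩ : Fin n) : ℕ) = n-1 := rfl
  rw [psi_eq, Af_Ev, Bil_Ev n hn _ ⟨n-1, by omega⟩, hv]
  rw [coord_Ev n _ (n-1+1) (by omega) (by omega), hv]
  rw [if_pos (by omega : (1:ℕ) ≤ n-1), if_neg (by omega : ¬ n-1 ≤ n-2),
      if_pos (rfl : n-1+1 = n-1+1)]
  rw [Nat.choose_self, show n-1-1 = n-2 by omega, Nat.choose_self]
  have h2 : (0:ℝ) < ((2:ℝ)^(n-1))⁻¹ := by positivity
  have h3 : ((2:ℝ)^(n-1))⁻¹ < 1 := by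
    rw [inv_lt_one_iff₀]
    right
    exact one_lt_pow₀ (by norm_num) (by omega)
  nlinarith

lemma choose_logconcave (m k : ℕ) (h1 : 1 ≤ k) (h2 : k + 1 ≤ m) :
    ((m.choose (k-1) : ℕ) : ℝ) * ((m.choose (k+1) : ℕ) : ℝ) < ((m.choose k : ℕ) : ℝ)^2 := by
  obtain ⟨r, hm, hr1⟩ : ∃ r, m = k + r ∧ 1 ≤ r := ⟨m - k, by omega, by omega⟩
  subst hm
  have e1 : (k+r).choose (k+1) * (k+1) = (k+r).choose k * r := by
    have h := Nat.choose_succ_right_eq (k+r) k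
    rwa [show k+r-k = r by omega] at h
  have e2 : (k+r).choose k * k = (k+r).choose (k-1) * (r+1) := by
    have h := Nat.choose_succ_right_eq (k+r) (k-1)
    rw [show k-1+1 = k by omega] at h
    rw [h, show k+r-(k-1) = r+1 by omega]
  have hbpos : 0 < (k+r).choose k := Nat.choose_pos (by omega)
  have e1' : ((k+r).choose (k+1) : ℝ) * (k+1) = ((k+r).choose k : ℝ) * r := by exact_mod_cast e1
  have e2' : ((k+r).choose k : ℝ) * k = ((k+r).choose (k-1) : ℝ) * (r+1) := by exact_mod_cast e2
  have hb' : (1:ℝ) ≤ ((k+r).choose k : ℝ) := by exact_mod_cast hbpos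
  have hk' : (1:ℝ) ≤ (k:ℝ) := by exact_mod_cast h1
  have hr' : (1:ℝ) ≤ (r:ℝ) := by exact_mod_cast hr1
  have key : ((k+r).choose (k-1) : ℝ) * ((k+r).choose (k+1)) * ((k+1)*(r+1))
      = ((k+r).choose k : ℝ)^2 * (k*r) := by
    have := mul_comm (((k+r).choose (k-1) : ℝ) * (r+1)) (((k+r).choose (k+1) : ℝ) * (k+1))
    calc ((k+r).choose (k-1) : ℝ) * ((k+r).choose (k+1)) * ((k+1)*(r+1))
        = (((k+r).choose (k-1) : ℝ) * (r+1)) * (((k+r).choose (k+1) : ℝ) * (k+1)) := by ring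
      _ = (((k+r).choose k : ℝ) * k) * (((k+r).choose k : ℝ) * r) := by rw [← e2', e1']
      _ = ((k+r).choose k : ℝ)^2 * (k*r) := by ring
  have hfac : (0:ℝ) < (k+1)*(r+1) := by positivity
  have h6 : ((k+r).choose (k-1) : ℝ) * ((k+r).choose (k+1)) * ((k+1)*(r+1))
      < ((k+r).choose k : ℝ)^2 * ((k+1)*(r+1)) := by
    rw [key]
    have hb2 : (1:ℝ) ≤ ((k+r).choose k : ℝ)^2 := by nlinarith
    nlinarith
  exact lt_of_mul_lt_mul_right (by linarith) (le_of_lt hfac)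

lemma quad_roots (α β γ : ℝ) (hα : α < 0) (hγ : 0 < γ) :
    ∃ t1 t2 : ℝ, t1 ≠ t2 ∧ α*t1^2 + 2*β*t1 + γ = 0 ∧ α*t2^2 + 2*β*t2 + γ = 0 := by
  have hαne : α ≠ 0 := ne_of_lt hα
  set d := Real.sqrt (β^2 - α*γ) with hd
  have hd2 : d^2 = β^2 - α*γ := Real.sq_sqrt (by nlinarith)
  have hdpos : 0 < d := Real.sqrt_pos.mpr (by nlinarith)
  refine ⟨(-β+d)/α, (-β-d)/α, ?_, ?_, ?_⟩
  · intro h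
    have h2 : (-β+d) = (-β-d) := by
      have h3 : (-β+d)/α * α = (-β-d)/α * α := by rw [h]
      rwa [div_mul_cancel₀ _ hαne, div_mul_cancel₀ _ hαne] at h3
    linarith
  · field_simp
    linear_combination hd2
  · field_simp
    linear_combination hd2

lemma cross_kill (n : ℕ) (x : Fin n → ℝ)
    (h0 : ∀ w, psi n w = 0 → Af n x * Af n w - Bil n x w = 0)
    (u v : Fin n → ℝ) (hu : 0 < psi n u) (hv : psi n v < 0) :
    ∀ w, Af n x * Af n w - Bil n x w = 0 := by
  have key : ∀ (p q : Fin n → ℝ), 0 < psi n p → psi n q < 0 →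
      (Af n x * Af n q - Bil n x q = 0) ∧ (Af n x * Af n p - Bil n x p = 0) := by
    intro p q hp hq
    obtain ⟨t1, t2, hne, h1, h2⟩ :=
      quad_roots (psi n q) (Af n p * Af n q - Bil n p q) (psi n p) hq hp
    have r1 : psi n ((1:ℝ) • p + t1 • q) = 0 := by
      rw [psi_comb]; nlinarith [h1]
    have r2 : psi n ((1:ℝ) • p + t2 • q) = 0 := by
      rw [psi_comb]; nlinarith [h2]
    have c1 := h0 _ r1
    have c2 := h0 _ r2
    rw [Af_comb, Bil_comb_right] at c1 c2
    have hq0 : Af n x * Af n q - Bil n x q = 0 := by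
      have h5 : (t1 - t2) * (Af n x * Af n q - Bil n x q) = 0 := by
        linear_combination c1 - c2
      rcases mul_eq_zero.mp h5 with h6 | h6
      · exact absurd (sub_eq_zero.mp h6) hne
      · exact h6
    refine ⟨hq0, ?_⟩
    linear_combination c1 - t1 * hq0
  intro w
  rcases lt_trichotomy (psi n w) 0 with h | h | h
  · exact (key u w hu h).1
  · exact h0 w h
  · exact (key w v h hv).2

set_option maxHeartbeats 2000000 in
/-- For `n ≥ 3` and `x ∈ Ind n`: every line segment from a point of `Ind n` to `x`
lies in `Ind n` if and only if `x = c·𝟙` for some `c ∈ [0,1]`. -/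
theorem special_point_characterization (n : ℕ) (hn : 3 ≤ n) (x : Fin n → ℝ)
    (hx : x ∈ Ind n) :
    (∀ p ∈ Ind n, ∀ t ∈ Set.Icc (0:ℝ) 1, t • p + (1 - t) • x ∈ Ind n) ↔
      ∃ c ∈ Set.Icc (0:ℝ) 1, x = c • (1 : Fin n → ℝ) := by
  have hn2 : 2 ≤ n := by omega
  have hsmul : ∀ c : ℝ, c • (1 : Fin n → ℝ) = c • (1 : Fin n → ℝ) + (0:ℝ) • (1 : Fin n → ℝ) := by
    intro c; simp
  constructor
  · -- forward
    intro hseg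
    -- Step 1: cross functional vanishes on Ind n
    have hInd : ∀ p ∈ Ind n, Af n x * Af n p - Bil n x p = 0 := by
      intro p hp
      have h2 := (hseg p hp (1/2) (by norm_num)).2
      rw [psi_comb] at h2
      rw [hp.2, hx.2, Bil_symm n p x] at h2
      nlinarith [h2]
    -- Step 2: cross functional vanishes on the zero cone of psi
    have hC0 : ∀ w, psi n w = 0 → Af n x * Af n w - Bil n x w = 0 := by
      intro w hw
      set M : ℝ := 1 + ∑ i, |w i| with hM
      have hsum0 : (0:ℝ) ≤ ∑ i, |w i| := Finset.sum_nonneg (fun i _ => abs_nonneg _)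
      have hM1 : 1 ≤ M := by simp [hM]; linarith
      have hMw : ∀ i, |w i| ≤ M := by
        intro i
        have h1 : |w i| ≤ ∑ i, |w i| :=
          Finset.single_le_sum (fun i _ => abs_nonneg (w i)) (Finset.mem_univ i)
        simp [hM]; linarith
      set δ : ℝ := (2*M)⁻¹ with hδdef
      have hδ : 0 < δ := by positivity
      have hδM : δ * M = 1/2 := by
        rw [hδdef]; field_simp
      have hq : ((1:ℝ)/2) • (1 : Fin n → ℝ) + δ • w ∈ Ind n := by
        constructor
        · intro i
          have h1 := hMw i
          have h2 : |δ * w i| ≤ 1/2 := by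
            rw [abs_mul, abs_of_pos hδ]
            calc δ * |w i| ≤ δ * M := by nlinarith
              _ = 1/2 := hδM
          have h3 := abs_le.mp h2
          simp only [Pi.add_apply, Pi.smul_apply, Pi.one_apply, smul_eq_mul, Set.mem_Icc]
          constructor <;> nlinarith [h3.1, h3.2]
        · rw [psi_comb, psi_one n hn2, hw, Af_one n (by omega), Bil_symm n (1 : Fin n → ℝ) w,
              Bil_one n hn2]
          ring
      have h4 := hInd _ hq
      rw [Af_comb, Bil_comb_right, Af_one n (by omega), Bil_one n hn2] at h4
      have h5 : δ * (Af n x * Af n w - Bil n x w) = 0 := by linear_combination h4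
      rcases mul_eq_zero.mp h5 with h6 | h6
      · exact absurd h6 (ne_of_gt hδ)
      · exact h6
    -- Step 3: cross functional vanishes identically
    have hall := cross_kill n x hC0 _ _ (psi_Ev_first n hn) (psi_Ev_last n hn)
    -- Step 4: coordinate equations
    set a := Af n x with ha
    clear_value a
    have hpow : ((2:ℝ)^(n-1)) ≠ 0 := by positivity
    have heq : ∀ j : Fin n, a * ((n-1).choose (j:ℕ) : ℝ)
        = (if 1 ≤ (j:ℕ) then ((n-2).choose ((j:ℕ)-1) : ℝ) else 0) * coord n x ((j:ℕ)+1)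
          + (if (j:ℕ) ≤ n-2 then ((n-2).choose (j:ℕ) : ℝ) else 0) * coord n x (n-(j:ℕ)-1) := by
      intro j
      have h := hall (Ev n j)
      rw [Af_Ev, Bil_Ev n hn x j] at h
      have h2 : ((2:ℝ)^(n-1))⁻¹ * (a * ((n-1).choose (j:ℕ) : ℝ)
          - ((if 1 ≤ (j:ℕ) then ((n-2).choose ((j:ℕ)-1) : ℝ) else 0) * coord n x ((j:ℕ)+1)
          + (if (j:ℕ) ≤ n-2 then ((n-2).choose (j:ℕ) : ℝ) else 0) * coord n x (n-(j:ℕ)-1))) = 0 := by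
        linear_combination h
      rcases mul_eq_zero.mp h2 with h3 | h3
      · exact absurd h3 (inv_ne_zero hpow)
      · linarith
    -- convenient restatement using 0-based coordinates
    have hcoord : ∀ m : ℕ, (hm : m < n) → coord n x (m+1) = x ⟨m, hm⟩ := by
      intro m hm
      unfold coord
      rw [dif_pos ⟨by omega, by omega⟩]
      congr 1
    have heqN : ∀ J, J < n → a * ((n-1).choose J : ℝ)
        = (if 1 ≤ J then ((n-2).choose (J-1) : ℝ) else 0) * coord n x (J+1)
          + (if J ≤ n-2 then ((n-2).choose J : ℝ) else 0) * coord n x (n-J-1) := by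
      intro J hJ
      have := heq ⟨J, hJ⟩
      simpa using this
    have hlast : coord n x ((n-1)+1) = a := by
      have h := heqN (n-1) (by omega)
      rw [if_pos (by omega), if_neg (by omega), Nat.choose_self,
          show n-1-1 = n-2 by omega, Nat.choose_self] at h
      push_cast at h
      linarith
    have hsecond : coord n x ((n-2)+1) = a := by
      have h := heqN 0 (by omega)
      rw [if_neg (by omega), if_pos (by omega), Nat.choose_zero_right, Nat.choose_zero_right,
          show n-0-1 = (n-2)+1 by omega] at h
      push_cast at h
      linarith
    have hfirst : coord n x (0+1) = a := by
      have h := heqN (n-2) (by omega)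
      rw [if_pos (by omega), if_pos (by omega), show n-(n-2)-1 = 0+1 by omega,
          Nat.choose_self] at h
      have c1 : (n-1).choose (n-2) = n-1 := by
        have h2 := Nat.choose_symm (by omega : 1 ≤ n-1)
        rw [show n-1-1 = n-2 by omega] at h2
        rw [h2, Nat.choose_one_right]
      have c2 : (n-2).choose (n-2-1) = n-2 := by
        have h2 := Nat.choose_symm (by omega : 1 ≤ n-2)
        rw [show n-2-1 = n-2-1 from rfl] at h2
        rw [h2, Nat.choose_one_right]
      rw [c1, c2, hsecond] at h
      have c3 : ((n-1 : ℕ) : ℝ) = ((n-2 : ℕ) : ℝ) + 1 := by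
        rw [show n-1 = (n-2)+1 by omega]
        push_cast
        ring
      rw [c3] at h
      push_cast at h
      linarith
    have hmid : ∀ J, 1 ≤ J → J ≤ n-3 → coord n x (J+1) = a := by
      intro J h1 h3
      have hJn : J < n := by omega
      have e1 := heqN J hJn
      have e2 := heqN (n-2-J) (by omega)
      rw [if_pos h1, if_pos (by omega), show n-J-1 = (n-2-J)+1 by omega] at e1
      rw [if_pos (by omega), if_pos (by omega), show n-(n-2-J)-1 = J+1 by omega] at e2
      have s1 : (n-2).choose ((n-2-J)-1) = (n-2).choose (J+1) := by
        rw [show (n-2-J)-1 = (n-2)-(J+1) by omega]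
        exact Nat.choose_symm (by omega)
      have s2 : (n-2).choose (n-2-J) = (n-2).choose J := by
        have := Nat.choose_symm (by omega : J ≤ n-2)
        simpa using this
      have s3 : (n-1).choose (n-2-J) = (n-1).choose (J+1) := by
        rw [show n-2-J = (n-1)-(J+1) by omega]
        exact Nat.choose_symm (by omega)
      rw [s1, s2, s3] at e2
      have p1 : ((n-1).choose J : ℝ) = ((n-2).choose (J-1) : ℝ) + ((n-2).choose J : ℝ) := by
        have h := Nat.choose_succ_succ (n-2) (J-1)
        rw [Nat.succ_eq_add_one, Nat.succ_eq_add_one,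
            show (n-2)+1 = n-1 by omega, show (J-1)+1 = J by omega] at h
        exact_mod_cast h
      have p2 : ((n-1).choose (J+1) : ℝ) = ((n-2).choose J : ℝ) + ((n-2).choose (J+1) : ℝ) := by
        have h := Nat.choose_succ_succ (n-2) J
        rw [Nat.succ_eq_add_one, Nat.succ_eq_add_one,
            show (n-2)+1 = n-1 by omega] at h
        exact_mod_cast h
      have hdet := choose_logconcave (n-2) J h1 (by omega)
      have hB1 : (0:ℝ) < ((n-2).choose J : ℝ) := by
        exact_mod_cast Nat.choose_pos (by omega : J ≤ n-2)
      set B0 := ((n-2).choose (J-1) : ℝ) with hB0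
      set B1 := ((n-2).choose J : ℝ) with hB1d
      set B2 := ((n-2).choose (J+1) : ℝ) with hB2
      set u := coord n x (J+1) with hu
      set v := coord n x ((n-2-J)+1) with hvv
      clear_value B0 B1 B2 u v
      have q1 : B0*(u-a) + B1*(v-a) = 0 := by linear_combination a * p1 - e1
      have q2 : B1*(u-a) + B2*(v-a) = 0 := by linear_combination a * p2 - e2
      have hv5 : (B1^2 - B0*B2) * (v - a) = 0 := by linear_combination B1*q1 - B0*q2
      have hveq : v = a := by
        rcases mul_eq_zero.mp hv5 with h6 | h6
        · nlinarith [hdet]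
        · linarith
      have hueq : B1 * (u - a) = 0 := by
        rw [hveq] at q2
        linarith
      rcases mul_eq_zero.mp hueq with h6 | h6
      · nlinarith
      · linarith
    have hallcoord : ∀ m, (hm : m < n) → x ⟨m, hm⟩ = a := by
      intro m hm
      rw [← hcoord m hm]
      by_cases h1 : m = n-1
      · subst h1; exact hlast
      · by_cases h2 : m = n-2
        · subst h2; exact hsecond
        · by_cases h3 : m = 0
          · subst h3; exact hfirst
          · exact hmid m (by omega) (by omega)
    have hb := hx.1 ⟨n-1, by omega⟩
    rw [hallcoord (n-1) (by omega)] at hb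
    refine ⟨a, hb, funext fun i => ?_⟩
    have hi := hallcoord i.val i.isLt
    simp only [Fin.eta] at hi
    simp only [Pi.smul_apply, Pi.one_apply, smul_eq_mul, mul_one]
    exact hi
  · -- backward
    rintro ⟨c, ⟨hc0, hc1⟩, rfl⟩ p hp t ⟨ht0, ht1⟩
    have hAfc : Af n (c • (1 : Fin n → ℝ)) = c := by
      rw [hsmul c, Af_comb, Af_one n (by omega)]
      ring
    have hBilc : Bil n p (c • (1 : Fin n → ℝ)) = c * Af n p := by
      rw [hsmul c, Bil_comb_right, Bil_one n hn2]
      ring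
    have hpsic : psi n (c • (1 : Fin n → ℝ)) = 0 := by
      rw [hsmul c, psi_comb, psi_one n hn2]
      ring
    constructor
    · intro i
      have hpi := hp.1 i
      simp only [Pi.add_apply, Pi.smul_apply, Pi.one_apply, smul_eq_mul, Set.mem_Icc]
      constructor <;> nlinarith [hpi.1, hpi.2]
    · rw [psi_comb, hp.2, hpsic, hAfc, hBilc]
      ring
end

section
/- For every n ≥ 3, the set Ind_n, equipped with the subspace topology inherited from ℝ^n, is a contractible topological space. -/
lemma coord_smul (n : ℕ) (c : ℝ) (p : Fin n → ℝ) (k : ℕ) :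
    coord n (c • p) k = c * coord n p k := by
  unfold coord
  split <;> simp

lemma psi_smul (n : ℕ) (c : ℝ) (p : Fin n → ℝ) :
    psi n (c • p) = c ^ 2 * psi n p := by
  unfold psi
  simp only [coord_smul]
  have h1 : ∑ k ∈ Finset.range n, ((n-1).choose k : ℝ) * (c * coord n p (k+1))
      = c * ∑ k ∈ Finset.range n, ((n-1).choose k : ℝ) * coord n p (k+1) := by
    rw [Finset.mul_sum]; exact Finset.sum_congr rfl fun k _ => by ring
  have h2 : ∑ k ∈ Finset.range (n-1),
        ((n-2).choose k : ℝ) * ((c * coord n p (k+2))^2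
          + (c * coord n p (k+1)) * (c * coord n p (n-k-1)))
      = c ^ 2 * ∑ k ∈ Finset.range (n-1),
        ((n-2).choose k : ℝ) * ((coord n p (k+2))^2 + coord n p (k+1) * coord n p (n-k-1)) := by
    rw [Finset.mul_sum]; exact Finset.sum_congr rfl fun k _ => by ring
  rw [h1, h2]; ring

lemma zero_mem_Ind (n : ℕ) : (0 : Fin n → ℝ) ∈ Ind n := by
  constructor
  · intro i; simp [Set.mem_Icc]
  · have := psi_smul n 0 0
    simpa using this

lemma smul_mem_Ind {n : ℕ} {p : Fin n → ℝ} (hp : p ∈ Ind n) {t : ℝ}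
    (ht0 : 0 ≤ t) (ht1 : t ≤ 1) : t • p ∈ Ind n := by
  obtain ⟨hb, hψ⟩ := hp
  constructor
  · intro i
    obtain ⟨h0, h1⟩ := hb i
    simp only [Pi.smul_apply, smul_eq_mul, Set.mem_Icc]
    constructor
    · positivity
    · calc t * p i ≤ 1 * 1 := by
            apply mul_le_mul ht1 h1 h0 zero_le_one
        _ = 1 := by ring
  · rw [psi_smul, hψ, mul_zero]

/-- For `n ≥ 3`, `Ind n` (with the subspace topology from `ℝⁿ`) is contractible. -/
theorem ind_contractible (n : ℕ) (hn : 3 ≤ n) : ContractibleSpace (Ind n) := by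
  rw [contractible_iff_id_nullhomotopic]
  refine ⟨⟨(0 : Fin n → ℝ), zero_mem_Ind n⟩, ⟨?_⟩⟩
  exact
    { toFun := fun q => ⟨((1:ℝ) - (q.1 : ℝ)) • (q.2 : Fin n → ℝ),
        smul_mem_Ind q.2.2 (by have := q.1.2.2; linarith) (by have := q.1.2.1; linarith)⟩
      continuous_toFun := by
        apply Continuous.subtype_mk
        exact ((continuous_const.sub
          (continuous_subtype_val.comp continuous_fst)).smul
          (continuous_subtype_val.comp continuous_snd))
      map_zero_left := fun p => by apply Subtype.ext; simp
      map_one_left := fun p => by apply Subtype.ext; simp }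
end
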